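/- Necessary conditions for optimizers (Lemma 2, direct direction): if random variables X, Y, U (finite-valued, on a common probability space) satisfy I[X:U] = 0 and I[U:Y] = H[Y|X], then H[Y|(X,U)] = 0 and I[X:U|Y] = 0. -/

import Mathlib

open MeasureTheory ProbabilityTheory Real

noncomputable section

variable {Ω : Type*} [MeasurableSpace Ω]

/-- Shannon entropy (natural logarithm) of a finite-valued random variable `Z` under `μ`. -/
def ent {S : Type*} [Fintype S] (μ : Measure Ω) (Z : Ω → S) : ℝ :=
  ∑ z : S, Real.negMulLog (μ (Z ⁻¹' {z})).toReal

/-- Conditional entropy `H[Z₁ | Z₂] = H[(Z₁,Z₂)] - H[Z₂]`. -/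
def condEnt {S T : Type*} [Fintype S] [Fintype T] (μ : Measure Ω)
    (Z₁ : Ω → S) (Z₂ : Ω → T) : ℝ :=
  ent μ (fun ω => (Z₁ ω, Z₂ ω)) - ent μ Z₂

/-- Mutual information `I[Z₁ : Z₂] = H[Z₁] + H[Z₂] - H[(Z₁,Z₂)]`. -/
def mutInfo {S T : Type*} [Fintype S] [Fintype T] (μ : Measure Ω)
    (Z₁ : Ω → S) (Z₂ : Ω → T) : ℝ :=
  ent μ Z₁ + ent μ Z₂ - ent μ (fun ω => (Z₁ ω, Z₂ ω))

/-- Conditional mutual information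
`I[Z₁ : Z₂ | Z₃] = H[(Z₁,Z₃)] + H[(Z₂,Z₃)] - H[(Z₁,Z₂,Z₃)] - H[Z₃]`. -/
def condMutInfo {S T R : Type*} [Fintype S] [Fintype T] [Fintype R] (μ : Measure Ω)
    (Z₁ : Ω → S) (Z₂ : Ω → T) (Z₃ : Ω → R) : ℝ :=
  ent μ (fun ω => (Z₁ ω, Z₃ ω)) + ent μ (fun ω => (Z₂ ω, Z₃ ω))
    - ent μ (fun ω => (Z₁ ω, Z₂ ω, Z₃ ω)) - ent μ Z₃

/-! Both conclusions follow from the hypotheses by linear arithmetic once two Shannon inequalities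
are available: `H[Y | (X,U)] ≥ 0` and `I[X : U | Y] ≥ 0`. Indeed `I[X:U] = 0` and
`I[U:Y] = H[Y|X]` give `H[(U,Y)] = H[(X,U)] + H[Y] - H[(X,Y)]`, whence
`I[X : U | Y] = -H[Y | (X,U)]`; two nonnegative numbers summing to zero both vanish.
The conditional mutual information inequality reduces, fibre by fibre of `Y`, to subadditivity of
entropy for a nonnegative matrix, which is Gibbs' inequality `p log q ≤ p log p + q - p`
applied to the product of the marginals. -/

open Finset

lemma mul_log_le_mul_log_add_sub {p q : ℝ} (hp : 0 ≤ p) (hq : 0 ≤ q) (hpq : 0 < p → 0 < q) :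
    p * log q ≤ p * log p + (q - p) := by
  rcases hp.eq_or_lt with rfl | hp
  · simpa using hq
  have hq := hpq hp
  have hlog : log (q / p) ≤ q / p - 1 := log_le_sub_one_of_pos (div_pos hq hp)
  rw [log_div hq.ne' hp.ne'] at hlog
  have := mul_le_mul_of_nonneg_left hlog hp.le
  rw [mul_sub, mul_sub, mul_div_cancel₀ _ hp.ne'] at this
  linarith

lemma negMulLog_sum_le_sum_negMulLog {ι : Type*} (s : Finset ι) {f : ι → ℝ}
    (hf : ∀ i ∈ s, 0 ≤ f i) : negMulLog (∑ i ∈ s, f i) ≤ ∑ i ∈ s, negMulLog (f i) := by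
  simp only [negMulLog, neg_mul, sum_mul, ← sum_neg_distrib]
  refine sum_le_sum fun i hi => neg_le_neg ?_
  rcases (hf i hi).eq_or_lt with h | h
  · simp [← h]
  · exact mul_le_mul_of_nonneg_left (log_le_log h (single_le_sum hf hi)) h.le

lemma sum_negMulLog_add_negMulLog_sum_le {S T : Type*} [Fintype S] [Fintype T]
    {q : S → T → ℝ} (hq : ∀ s t, 0 ≤ q s t) :
    ∑ s, ∑ t, negMulLog (q s t) + negMulLog (∑ s, ∑ t, q s t) ≤
      ∑ s, negMulLog (∑ t, q s t) + ∑ t, negMulLog (∑ s, q s t) := by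
  set A : S → ℝ := fun s => ∑ t, q s t
  set B : T → ℝ := fun t => ∑ s, q s t
  set C : ℝ := ∑ s, ∑ t, q s t
  have hA : ∀ s t, q s t ≤ A s := fun s t => single_le_sum (fun t _ => hq s t) (mem_univ t)
  have hB : ∀ s t, q s t ≤ B t := fun s t => single_le_sum (fun s _ => hq s t) (mem_univ s)
  have hA₀ : ∀ s, 0 ≤ A s := fun s => sum_nonneg fun t _ => hq s t
  have hB₀ : ∀ t, 0 ≤ B t := fun t => sum_nonneg fun s _ => hq s t
  have hC : ∀ s, A s ≤ C := fun s => single_le_sum (fun s _ => hA₀ s) (mem_univ s)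
  have hC₀ : 0 ≤ C := sum_nonneg fun s _ => hA₀ s
  have marginals_pos : ∀ s t, 0 < q s t → 0 < A s ∧ 0 < B t ∧ 0 < C := fun s t h =>
    ⟨h.trans_le (hA s t), h.trans_le (hB s t), (h.trans_le (hA s t)).trans_le (hC s)⟩
  have sum_product_marginals : ∑ s, ∑ t, A s * B t / C = C := by
    simp_rw [← sum_div, ← mul_sum, ← sum_mul]
    rw [show ∑ t, B t = C from sum_comm]
    rcases eq_or_ne C 0 with h | h
    · simp [h]
    · exact mul_div_cancel_right₀ C h
  have log_product_marginals : ∀ s t, q s t * log (A s * B t / C) =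
      q s t * log (A s) + q s t * log (B t) - q s t * log C := by
    intro s t
    rcases (hq s t).eq_or_lt with h | h
    · simp [← h]
    obtain ⟨hAp, hBp, hCp⟩ := marginals_pos s t h
    rw [log_div (mul_pos hAp hBp).ne' hCp.ne', log_mul hAp.ne' hBp.ne']
    ring
  have gibbs := sum_le_sum fun s (_ : s ∈ univ) => sum_le_sum fun t (_ : t ∈ univ) =>
    mul_log_le_mul_log_add_sub (q := A s * B t / C) (hq s t)
      (by have := hA₀ s; have := hB₀ t; positivity) fun h => by
      obtain ⟨hAp, hBp, hCp⟩ := marginals_pos s t h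
      positivity
  simp only [log_product_marginals, sum_add_distrib, sum_sub_distrib, sum_product_marginals]
    at gibbs
  have eA : ∑ s, ∑ t, q s t * log (A s) = ∑ s, A s * log (A s) := by simp only [← sum_mul, A]
  have eB : ∑ s, ∑ t, q s t * log (B t) = ∑ t, B t * log (B t) := by
    rw [sum_comm]; simp only [← sum_mul, B]
  have eC : ∑ s, ∑ t, q s t * log C = C * log C := by simp only [← sum_mul, C]
  simp only [negMulLog, neg_mul, sum_neg_distrib]
  linarith

lemma ent_comp_equiv {S T : Type*} [Fintype S] [Fintype T] (μ : Measure Ω) (e : S ≃ T)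
    (Z : Ω → S) : ent μ (fun ω => e (Z ω)) = ent μ Z := by
  refine (Fintype.sum_equiv e _ _ fun s => ?_).symm
  congr 3
  ext ω
  simp

section Entropy

variable {S T R : Type*} [MeasurableSpace S] [MeasurableSingletonClass S]
  [MeasurableSpace T] [MeasurableSingletonClass T] [MeasurableSpace R] [MeasurableSingletonClass R]
  (μ : Measure Ω) [IsFiniteMeasure μ]

lemma toReal_measure_preimage_singleton_eq_sum [Fintype S] {f : Ω → S} {g : Ω → T}
    (hf : Measurable f) (hg : Measurable g) (t : T) :
    (μ (g ⁻¹' {t})).toReal = ∑ s, (μ ((fun ω => (f ω, g ω)) ⁻¹' {(s, t)})).toReal := by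
  have hfibre : g ⁻¹' {t} = (fun ω => (f ω, g ω)) ⁻¹' ↑(univ ×ˢ {t} : Finset (S × T)) := by
    ext; simp [eq_comm]
  change μ.real _ = ∑ s, μ.real _
  rw [hfibre, ← sum_measureReal_preimage_singleton _ fun _ _ =>
    (hf.prodMk hg) (measurableSet_singleton _), sum_product]
  simp only [sum_singleton]

lemma condEnt_nonneg [Fintype S] [Fintype T] {Z₁ : Ω → S} {Z₂ : Ω → T}
    (h₁ : Measurable Z₁) (h₂ : Measurable Z₂) : 0 ≤ condEnt μ Z₁ Z₂ := by
  rw [condEnt, sub_nonneg, ent, ent, Fintype.sum_prod_type, sum_comm]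
  refine sum_le_sum fun t _ => ?_
  rw [toReal_measure_preimage_singleton_eq_sum μ h₁ h₂ t]
  exact negMulLog_sum_le_sum_negMulLog _ fun _ _ => ENNReal.toReal_nonneg

lemma condMutInfo_nonneg [Fintype S] [Fintype T] [Fintype R]
    {Z₁ : Ω → S} {Z₂ : Ω → T} {Z₃ : Ω → R} (h₁ : Measurable Z₁) (h₂ : Measurable Z₂) (h₃ : Measurable Z₃) :
    0 ≤ condMutInfo μ Z₁ Z₂ Z₃ := by
  set q : S → T → R → ℝ := fun s t r => (μ ((fun ω => (Z₁ ω, Z₂ ω, Z₃ ω)) ⁻¹' {(s, t, r)})).toReal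
  have marginal₁₃ : ∀ s r, (μ ((fun ω => (Z₁ ω, Z₃ ω)) ⁻¹' {(s, r)})).toReal = ∑ t, q s t r := by
    intro s r
    rw [toReal_measure_preimage_singleton_eq_sum μ h₂ (h₁.prodMk h₃)]
    congr! 3 with t
    ext ω
    simp [and_left_comm]
  have marginal₂₃ : ∀ t r, (μ ((fun ω => (Z₂ ω, Z₃ ω)) ⁻¹' {(t, r)})).toReal = ∑ s, q s t r :=
    fun t r => toReal_measure_preimage_singleton_eq_sum μ h₁ (h₂.prodMk h₃) (t, r)
  have marginal₃ : ∀ r, (μ (Z₃ ⁻¹' {r})).toReal = ∑ s, ∑ t, q s t r := by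
    intro r
    rw [toReal_measure_preimage_singleton_eq_sum μ h₂ h₃, sum_comm]
    simp only [marginal₂₃]
  have e₁₂₃ : ent μ (fun ω => (Z₁ ω, Z₂ ω, Z₃ ω)) = ∑ r, ∑ s, ∑ t, negMulLog (q s t r) := by
    simp only [ent, Fintype.sum_prod_type]
    exact (sum_congr rfl fun s _ => sum_comm).trans sum_comm
  have e₁₃ : ent μ (fun ω => (Z₁ ω, Z₃ ω)) = ∑ r, ∑ s, negMulLog (∑ t, q s t r) := by
    simp only [ent, Fintype.sum_prod_type, marginal₁₃]
    exact sum_comm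
  have e₂₃ : ent μ (fun ω => (Z₂ ω, Z₃ ω)) = ∑ r, ∑ t, negMulLog (∑ s, q s t r) := by
    simp only [ent, Fintype.sum_prod_type, marginal₂₃]
    exact sum_comm
  have e₃ : ent μ Z₃ = ∑ r, negMulLog (∑ s, ∑ t, q s t r) := by
    simp only [ent, marginal₃]
  have fibrewise := sum_le_sum fun r (_ : r ∈ univ) =>
    sum_negMulLog_add_negMulLog_sum_le (q := fun s t => q s t r) fun _ _ => ENNReal.toReal_nonneg
  simp only [sum_add_distrib] at fibrewise
  rw [condMutInfo, e₁₂₃, e₁₃, e₂₃, e₃]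
  linarith

end Entropy

theorem optimizer_necessity_general {𝒳 𝒴 𝒰 : Type*} [Fintype 𝒳] [MeasurableSpace 𝒳] [MeasurableSingletonClass 𝒳]
    [Fintype 𝒴] [MeasurableSpace 𝒴] [MeasurableSingletonClass 𝒴]
    [Fintype 𝒰] [MeasurableSpace 𝒰] [MeasurableSingletonClass 𝒰]
    (μ : Measure Ω) [IsProbabilityMeasure μ]
    (X : Ω → 𝒳) (Y : Ω → 𝒴) (U : Ω → 𝒰)
    (hX : Measurable X) (hY : Measurable Y) (hU : Measurable U)
    (h1 : mutInfo μ X U = 0)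
    (h2 : mutInfo μ U Y = condEnt μ Y X) :
    condEnt μ Y (fun ω => (X ω, U ω)) = 0 ∧ condMutInfo μ X U Y = 0 := by
  have hYX : ent μ (fun ω => (Y ω, X ω)) = ent μ (fun ω => (X ω, Y ω)) :=
    ent_comp_equiv μ (Equiv.prodComm 𝒳 𝒴) (fun ω => (X ω, Y ω))
  have hYXU : ent μ (fun ω => (Y ω, X ω, U ω)) = ent μ (fun ω => (X ω, U ω, Y ω)) :=
    ent_comp_equiv μ ((Equiv.prodAssoc 𝒳 𝒰 𝒴).symm.trans (Equiv.prodComm (𝒳 × 𝒰) 𝒴))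
      (fun ω => (X ω, U ω, Y ω))
  have hcondEnt := condEnt_nonneg μ hY (hX.prodMk hU)
  have hcondMutInfo := condMutInfo_nonneg μ hX hU hY
  rw [mutInfo] at h1
  rw [mutInfo, condEnt, hYX] at h2
  rw [condEnt, hYXU] at hcondEnt ⊢
  rw [condMutInfo] at hcondMutInfo ⊢
  constructor <;> linarith

/-- Necessary conditions for optimizers (Lemma 2, direct direction). -/
theorem optimizer_necessity {𝒳 𝒴 𝒰 : Type*} [Fintype 𝒳] [Nonempty 𝒳] [MeasurableSpace 𝒳] [MeasurableSingletonClass 𝒳]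
    [Fintype 𝒴] [Nonempty 𝒴] [MeasurableSpace 𝒴] [MeasurableSingletonClass 𝒴]
    [Fintype 𝒰] [Nonempty 𝒰] [MeasurableSpace 𝒰] [MeasurableSingletonClass 𝒰]
    (μ : Measure Ω) [IsProbabilityMeasure μ]
    (X : Ω → 𝒳) (Y : Ω → 𝒴) (U : Ω → 𝒰)
    (hX : Measurable X) (hY : Measurable Y) (hU : Measurable U)
    (h1 : mutInfo μ X U = 0)
    (h2 : mutInfo μ U Y = condEnt μ Y X) :
    condEnt μ Y (fun ω => (X ω, U ω)) = 0 ∧ condMutInfo μ X U Y = 0 :=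
  optimizer_necessity_general μ X Y U hX hY hU h1 h2
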